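/- arXiv:1103.1858 — 2 statements merged into one kernel-verified Lean document; each statement's English description precedes it below -/
import Mathlib

section
/- Let g ≥ 2, let τ' ∈ H_{g−1}, let b ∈ ℂ^{g−1}, z₁ ∈ ℂ and z' ∈ ℂ^{g−1}. For t ∈ ℝ let τ(t) := [[it, bᵀ],[b, τ']] (a symmetric g×g complex matrix, whose imaginary part is positive definite for all sufficiently large t). Then, as t → +∞, the value Σ_{n ∈ ℤ^g} exp(πi·nᵀτ(t)n + 2πi·nᵀ(z₁ − it/2, z')) tends to the limit θ(τ', z') + e(z₁)·θ(τ', z' + b). (This is the degeneration of the theta function to the semi-abelic theta function of a torus rank one degeneration.) -/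
open Complex Matrix Finset Filter

/-- The Riemann theta function `θ(τ,z) = Σ_{n ∈ ℤ^g} exp(πi nᵀτn + 2πi nᵀz)`.
(The `tsum` is interpreted as `0` if the family is not summable.) -/
noncomputable def riemannTheta {g : ℕ} (τ : Matrix (Fin g) (Fin g) ℂ) (z : Fin g → ℂ) : ℂ :=
  ∑' n : Fin g → ℤ,
    Complex.exp ((Real.pi : ℂ) * Complex.I * (∑ i, ∑ j, (n i : ℂ) * τ i j * (n j : ℂ)) +
      2 * (Real.pi : ℂ) * Complex.I * (∑ i, (n i : ℂ) * z i))

/-- The block matrix `[[ω, bᵀ],[b, τ']]` of size `(h+1) × (h+1)`. -/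
noncomputable def blockTau {h : ℕ} (ω : ℂ) (b : Fin h → ℂ)
    (τ' : Matrix (Fin h) (Fin h) ℂ) : Matrix (Fin (h + 1)) (Fin (h + 1)) ℂ :=
  Matrix.of (Fin.cons (Fin.cons ω b) (fun i => Fin.cons (b i) (τ' i)))

private noncomputable def cE {h : ℕ} (τ' : Matrix (Fin h) (Fin h) ℂ) (b : Fin h → ℂ)
    (z₁ : ℂ) (z' : Fin h → ℂ) (n : Fin (h+1) → ℤ) : ℂ :=
  Complex.exp ((Real.pi : ℂ) * Complex.I *
      (2 * (n 0 : ℂ) * (∑ j, b j * (n j.succ : ℂ)) +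
        ∑ i, ∑ j, (n i.succ : ℂ) * τ' i j * (n j.succ : ℂ)) +
    2 * (Real.pi : ℂ) * Complex.I * ((n 0 : ℂ) * z₁ + ∑ j, (n j.succ : ℂ) * z' j))

private def kk {h : ℕ} (n : Fin (h+1) → ℤ) : ℤ := n 0 * (n 0 - 1)

private noncomputable def RR {h : ℕ} (τ' : Matrix (Fin h) (Fin h) ℂ) (b : Fin h → ℂ)
    (z₁ : ℂ) (z' : Fin h → ℂ) (n : Fin (h+1) → ℤ) : ℝ :=
  2 * (n 0 : ℝ) * (∑ j, (b j).im * (n j.succ : ℝ)) +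
    (∑ i, ∑ j, (n i.succ : ℝ) * (τ' i j).im * (n j.succ : ℝ)) +
    (2 * (n 0 : ℝ) * z₁.im + 2 * ∑ j, (n j.succ : ℝ) * (z' j).im)

private noncomputable def FF {h : ℕ} (τ' : Matrix (Fin h) (Fin h) ℂ) (b : Fin h → ℂ)
    (z₁ : ℂ) (z' : Fin h → ℂ) (t : ℝ) (n : Fin (h+1) → ℤ) : ℂ :=
  Complex.exp ((-(Real.pi * t * (kk n : ℝ)) : ℝ) : ℂ) * cE τ' b z₁ z' n

private noncomputable def gLim {h : ℕ} (τ' : Matrix (Fin h) (Fin h) ℂ) (b : Fin h → ℂ)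
    (z₁ : ℂ) (z' : Fin h → ℂ) (n : Fin (h+1) → ℤ) : ℂ :=
  if n 0 = 0 ∨ n 0 = 1 then cE τ' b z₁ z' n else 0

private noncomputable def bnd {h : ℕ} (τ' : Matrix (Fin h) (Fin h) ℂ) (b : Fin h → ℂ)
    (z₁ : ℂ) (z' : Fin h → ℂ) (T : ℝ) (n : Fin (h+1) → ℤ) : ℝ :=
  Real.exp (-Real.pi * (T * (kk n : ℝ) + RR τ' b z₁ z' n))

private lemma int_gauss_summable {δ : ℝ} (hδ : 0 < δ) :
    Summable fun n : ℤ => Real.exp (-δ * (n : ℝ) ^ 2) := by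
  have h := summable_pow_mul_jacobiTheta₂_term_bound 0 (T := δ / Real.pi)
    (by positivity) 0
  refine h.congr fun n => ?_
  rw [pow_zero, one_mul]
  congr 1
  have hπ : Real.pi ≠ 0 := Real.pi_ne_zero
  field_simp
  ring

private lemma pi_gauss_summable (g : ℕ) {δ : ℝ} (hδ : 0 < δ) :
    Summable fun n : Fin g → ℤ => Real.exp (-δ * ∑ i, (n i : ℝ) ^ 2) := by
  induction g with
  | zero => exact .of_finite
  | succ m ih =>
      have h2 : Summable fun p : ℤ × (Fin m → ℤ) =>
          Real.exp (-δ * (p.1 : ℝ) ^ 2) * Real.exp (-δ * ∑ i, (p.2 i : ℝ) ^ 2) :=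
        (int_gauss_summable hδ).mul_of_nonneg ih
          (fun _ => (Real.exp_pos _).le) (fun _ => (Real.exp_pos _).le)
      refine (Equiv.summable_iff (Fin.consEquiv fun _ : Fin (m+1) => ℤ)).mp
        (h2.congr fun p => ?_)
      show Real.exp _ * Real.exp _ =
        Real.exp (-δ * ∑ i, ((Fin.cons p.1 p.2 : Fin (m+1) → ℤ) i : ℝ) ^ 2)
      rw [← Real.exp_add, Fin.sum_univ_succ]
      simp only [Fin.cons_zero, Fin.cons_succ]
      ring_nf

private lemma posdef_quad_bound {h : ℕ} (hh : 1 ≤ h) (A : Matrix (Fin h) (Fin h) ℝ)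
    (hA : A.PosDef) : ∃ c > 0, ∀ x : Fin h → ℝ,
      c * ∑ i, (x i) ^ 2 ≤ ∑ i, ∑ j, x i * A i j * x j := by
  set φ : EuclideanSpace ℝ (Fin h) → ℝ := fun x => ∑ i, ∑ j, x i * A i j * x j with hφ
  have hcont : Continuous φ := by
    apply continuous_finset_sum
    intro i _
    apply continuous_finset_sum
    intro j _
    exact ((PiLp.continuous_apply 2 _ i).mul continuous_const).mul (PiLp.continuous_apply 2 _ j)
  have hcompact : IsCompact (Metric.sphere (0 : EuclideanSpace ℝ (Fin h)) 1) :=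
    isCompact_sphere _ _
  have hne : (Metric.sphere (0 : EuclideanSpace ℝ (Fin h)) 1).Nonempty := by
    refine ⟨EuclideanSpace.single ⟨0, hh⟩ (1 : ℝ), ?_⟩
    simp [mem_sphere_zero_iff_norm, EuclideanSpace.norm_single]
  obtain ⟨u, hu, humin⟩ := hcompact.exists_isMinOn hne hcont.continuousOn
  have hu1 : ‖u‖ = 1 := mem_sphere_zero_iff_norm.mp hu
  have hdot : ∀ y : Fin h → ℝ, star y ⬝ᵥ (A *ᵥ y) = ∑ i, ∑ j, y i * A i j * y j := by
    intro y
    simp only [star_trivial, dotProduct, mulVec, Finset.mul_sum]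
    exact Finset.sum_congr rfl fun i _ => Finset.sum_congr rfl fun j _ => by ring
  have hupos : 0 < φ u := by
    have hu0 : u ≠ 0 := by
      intro h0; rw [h0] at hu1; simp at hu1
    have := hA.dotProduct_mulVec_pos (x := (u : Fin h → ℝ)) (by simpa using hu0)
    rw [hdot] at this
    exact this
  refine ⟨φ u, hupos, fun x => ?_⟩
  by_cases hx : x = 0
  · subst hx; simp [φ]
  · set X : EuclideanSpace ℝ (Fin h) := WithLp.toLp 2 x with hX
    have hX0 : X ≠ 0 := by simpa [hX] using hx
    have hXn : 0 < ‖X‖ := norm_pos_iff.mpr hX0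
    set r : ℝ := ‖X‖ with hr
    have hmem : r⁻¹ • X ∈ Metric.sphere (0 : EuclideanSpace ℝ (Fin h)) 1 := by
      rw [mem_sphere_zero_iff_norm, norm_smul, norm_inv, norm_norm, ← hr,
        inv_mul_cancel₀ hXn.ne']
    have hmin : φ u ≤ φ (r⁻¹ • X) := humin hmem
    have hscale : φ (r⁻¹ • X) = r⁻¹ ^ 2 * φ X := by
      simp only [hφ, PiLp.smul_apply, smul_eq_mul, Finset.mul_sum]
      exact Finset.sum_congr rfl fun i _ => Finset.sum_congr rfl fun j _ => by ring
    have hnorm : ∑ i, (x i) ^ 2 = r ^ 2 := by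
      rw [hr, EuclideanSpace.norm_eq, Real.sq_sqrt (by positivity)]
      exact Finset.sum_congr rfl fun i _ => (_root_.sq_abs (x i)).symm
    rw [hscale] at hmin
    have : φ u * ∑ i, (x i) ^ 2 ≤ φ X := by
      rw [hnorm]
      calc φ u * r ^ 2 ≤ (r⁻¹ ^ 2 * φ X) * r ^ 2 := by
            apply mul_le_mul_of_nonneg_right hmin (sq_nonneg r)
        _ = φ X := by field_simp
    exact this

private lemma key_ineq {h : ℕ} (hh : 1 ≤ h) (τ' : Matrix (Fin h) (Fin h) ℂ)
    (hpos' : (Matrix.of fun i j => (τ' i j).im).PosDef)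
    (b : Fin h → ℂ) (z₁ : ℂ) (z' : Fin h → ℂ) :
    ∃ T > 0, ∃ δ > 0, ∃ K : ℝ, ∀ n : Fin (h+1) → ℤ,
      δ * ∑ i, (n i : ℝ) ^ 2 - K ≤ T * (kk n : ℝ) + RR τ' b z₁ z' n := by
  obtain ⟨c, hc, hq⟩ := posdef_quad_bound hh _ hpos'
  set a : Fin h → ℝ := fun j => 2 * (b j).im ^ 2 / c + 1 with ha
  set M : ℝ := (∑ j, a j) + z₁.im ^ 2 with hM
  have hMpos : 0 ≤ M := by
    have : 0 ≤ ∑ j, a j := Finset.sum_nonneg fun j _ => by positivity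
    positivity
  set T : ℝ := 2 * M + c / 2 + 1 with hT
  have hTpos : 0 < T := by positivity
  refine ⟨T, hTpos, c/4, by positivity, 1 + (4/c) * (∑ j : Fin h, (z' j).im ^ 2) + T, fun n => ?_⟩
  have hsq : ∑ i, (n i : ℝ) ^ 2 = (n 0 : ℝ) ^ 2 + ∑ j : Fin h, (n j.succ : ℝ) ^ 2 := by
    rw [Fin.sum_univ_succ]
  have hQ : c * ∑ j : Fin h, (n j.succ : ℝ) ^ 2 ≤
      ∑ i : Fin h, ∑ j : Fin h, (n i.succ : ℝ) * (τ' i j).im * (n j.succ : ℝ) := by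
    have := hq fun j => (n j.succ : ℝ)
    simpa using this
  have hB : -((∑ j, a j) * (n 0 : ℝ) ^ 2 + c/2 * ∑ j : Fin h, (n j.succ : ℝ) ^ 2) ≤
      2 * (n 0 : ℝ) * ∑ j : Fin h, (b j).im * (n j.succ : ℝ) := by
    have term : ∀ j ∈ Finset.univ, -(a j * (n 0 : ℝ) ^ 2 + c/2 * (n j.succ : ℝ) ^ 2) ≤
        2 * (n 0 : ℝ) * ((b j).im * (n j.succ : ℝ)) := by
      intro j _
      have h2 : (0:ℝ) ≤ (2/c) * ((b j).im * (n 0 : ℝ) + c/2 * (n j.succ : ℝ)) ^ 2 := by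
        positivity
      have h3 : (2/c) * ((b j).im * (n 0 : ℝ) + c/2 * (n j.succ : ℝ)) ^ 2 =
          (2 * (b j).im ^ 2 / c) * (n 0 : ℝ) ^ 2 +
            2 * (n 0 : ℝ) * ((b j).im * (n j.succ : ℝ)) + c/2 * (n j.succ : ℝ) ^ 2 := by
        field_simp
        ring
      rw [h3] at h2
      have h4 : (0:ℝ) ≤ (n 0 : ℝ) ^ 2 := sq_nonneg _
      simp only [ha]
      nlinarith
    have hsum := Finset.sum_le_sum term
    calc -((∑ j, a j) * (n 0 : ℝ) ^ 2 + c/2 * ∑ j : Fin h, (n j.succ : ℝ) ^ 2)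
        = -((∑ j : Fin h, a j * (n 0 : ℝ) ^ 2) + ∑ j : Fin h, c/2 * (n j.succ : ℝ) ^ 2) := by
          rw [Finset.sum_mul, Finset.mul_sum]
      _ = ∑ j : Fin h, -(a j * (n 0 : ℝ) ^ 2 + c/2 * (n j.succ : ℝ) ^ 2) := by
          rw [← Finset.sum_add_distrib, ← Finset.sum_neg_distrib]
      _ ≤ ∑ j : Fin h, 2 * (n 0 : ℝ) * ((b j).im * (n j.succ : ℝ)) := hsum
      _ = 2 * (n 0 : ℝ) * ∑ j : Fin h, (b j).im * (n j.succ : ℝ) := by rw [Finset.mul_sum]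
  have hY : -(c/4 * ∑ j : Fin h, (n j.succ : ℝ) ^ 2 + (4/c) * ∑ j : Fin h, (z' j).im ^ 2) ≤
      2 * ∑ j : Fin h, (n j.succ : ℝ) * (z' j).im := by
    have term : ∀ j ∈ Finset.univ, -(c/4 * (n j.succ : ℝ) ^ 2 + (4/c) * (z' j).im ^ 2) ≤
        2 * ((n j.succ : ℝ) * (z' j).im) := by
      intro j _
      have h2 : (0:ℝ) ≤ (4/c) * (c/4 * (n j.succ : ℝ) + (z' j).im) ^ 2 := by positivity
      have h3 : (4/c) * (c/4 * (n j.succ : ℝ) + (z' j).im) ^ 2 =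
          c/4 * (n j.succ : ℝ) ^ 2 + 2 * ((n j.succ : ℝ) * (z' j).im) +
            (4/c) * (z' j).im ^ 2 := by
        field_simp
        ring
      rw [h3] at h2
      linarith
    have hsum := Finset.sum_le_sum term
    calc -(c/4 * ∑ j : Fin h, (n j.succ : ℝ) ^ 2 + (4/c) * ∑ j : Fin h, (z' j).im ^ 2)
        = -((∑ j : Fin h, c/4 * (n j.succ : ℝ) ^ 2) + ∑ j : Fin h, (4/c) * (z' j).im ^ 2) := by
          rw [Finset.mul_sum, Finset.mul_sum]
      _ = ∑ j : Fin h, -(c/4 * (n j.succ : ℝ) ^ 2 + (4/c) * (z' j).im ^ 2) := by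
          rw [← Finset.sum_add_distrib, ← Finset.sum_neg_distrib]
      _ ≤ ∑ j : Fin h, 2 * ((n j.succ : ℝ) * (z' j).im) := hsum
      _ = 2 * ∑ j : Fin h, (n j.succ : ℝ) * (z' j).im := by rw [Finset.mul_sum]
  have hy1 : -(z₁.im ^ 2 * (n 0 : ℝ) ^ 2 + 1) ≤ 2 * (n 0 : ℝ) * z₁.im := by
    nlinarith [sq_nonneg (z₁.im * (n 0 : ℝ) + 1)]
  have hk : T * ((n 0 : ℝ) ^ 2 / 2 - 1) ≤ T * (kk n : ℝ) := by
    apply mul_le_mul_of_nonneg_left _ hTpos.le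
    have hkn : (kk n : ℝ) = (n 0 : ℝ) ^ 2 - (n 0 : ℝ) := by rw [kk]; push_cast; ring
    rw [hkn]
    nlinarith [sq_nonneg ((n 0 : ℝ) - 1)]
  have hT2 : T * ((n 0 : ℝ) ^ 2 / 2 - 1) =
      (∑ j, a j) * (n 0 : ℝ) ^ 2 + z₁.im ^ 2 * (n 0 : ℝ) ^ 2 + c/4 * (n 0 : ℝ) ^ 2 +
        (n 0 : ℝ) ^ 2 / 2 - T := by
    rw [hT, hM]; ring
  have hN2 : (0:ℝ) ≤ (n 0 : ℝ) ^ 2 := sq_nonneg _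
  rw [hsq, RR]
  linarith [hQ, hB, hY, hy1, hk, hT2, hN2]

private lemma term_eq {h : ℕ} (τ' : Matrix (Fin h) (Fin h) ℂ) (b : Fin h → ℂ)
    (z₁ : ℂ) (z' : Fin h → ℂ) (t : ℝ) (n : Fin (h+1) → ℤ) :
    Complex.exp ((Real.pi : ℂ) * Complex.I *
        (∑ i, ∑ j, (n i : ℂ) * blockTau (Complex.I * (t : ℂ)) b τ' i j * (n j : ℂ)) +
      2 * (Real.pi : ℂ) * Complex.I *
        (∑ i, (n i : ℂ) * ((Fin.cons (z₁ - Complex.I * (t : ℂ) / 2) z' : Fin (h+1) → ℂ) i))) =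
    FF τ' b z₁ z' t n := by
  rw [FF, cE, ← Complex.exp_add]
  congr 1
  have hs1 : (∑ i, ∑ j, (n i : ℂ) * blockTau (Complex.I * (t : ℂ)) b τ' i j * (n j : ℂ)) =
      (n 0 : ℂ) * (Complex.I * t) * (n 0 : ℂ) +
        2 * (n 0 : ℂ) * (∑ j, b j * (n j.succ : ℂ)) +
        ∑ i, ∑ j, (n i.succ : ℂ) * τ' i j * (n j.succ : ℂ) := by
    simp only [Fin.sum_univ_succ, blockTau, Matrix.of_apply, Fin.cons_zero, Fin.cons_succ]
    rw [Finset.sum_add_distrib]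
    have c1 : ∑ j : Fin h, (n 0 : ℂ) * b j * (n j.succ : ℂ) =
        (n 0 : ℂ) * ∑ j, b j * (n j.succ : ℂ) := by
      rw [Finset.mul_sum]; exact Finset.sum_congr rfl fun j _ => by ring
    have c2 : ∑ i : Fin h, (n i.succ : ℂ) * b i * (n 0 : ℂ) =
        (n 0 : ℂ) * ∑ j, b j * (n j.succ : ℂ) := by
      rw [Finset.mul_sum]; exact Finset.sum_congr rfl fun j _ => by ring
    rw [c1, c2]; ring
  have hs2 : (∑ i, (n i : ℂ) * ((Fin.cons (z₁ - Complex.I * (t : ℂ) / 2) z' : Fin (h+1) → ℂ) i)) =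
      (n 0 : ℂ) * (z₁ - Complex.I * t / 2) + ∑ j : Fin h, (n j.succ : ℂ) * z' j := by
    simp [Fin.sum_univ_succ]
  rw [hs1, hs2, kk]
  push_cast
  linear_combination ((Real.pi : ℂ) * t * ((n 0 : ℂ) ^ 2 - (n 0 : ℂ))) * Complex.I_sq

private lemma norm_cE {h : ℕ} (τ' : Matrix (Fin h) (Fin h) ℂ) (b : Fin h → ℂ)
    (z₁ : ℂ) (z' : Fin h → ℂ) (n : Fin (h+1) → ℤ) :
    ‖cE τ' b z₁ z' n‖ = Real.exp (-Real.pi * RR τ' b z₁ z' n) := by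
  rw [cE, Complex.norm_exp]
  congr 1
  simp only [Complex.add_re, Complex.mul_re, Complex.mul_im, Complex.I_re, Complex.I_im,
    Complex.ofReal_re, Complex.ofReal_im, Complex.re_sum, Complex.im_sum, Complex.add_im,
    Complex.intCast_re, Complex.intCast_im, Complex.re_ofNat, Complex.im_ofNat,
    mul_zero, zero_mul, mul_one, one_mul, zero_sub, sub_zero, zero_add, add_zero, neg_zero]
  rw [RR]
  ring

/-- Degeneration to torus rank one: with `τ(t) = [[it, bᵀ],[b, τ']]`, as `t → ∞`,
`θ(τ(t), (z₁ − it/2, z')) → θ(τ', z') + e(z₁) θ(τ', z' + b)`. -/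
theorem statement8 (h : ℕ) (hh : 1 ≤ h) (τ' : Matrix (Fin h) (Fin h) ℂ)
    (hsymm' : τ'.IsSymm)
    (hpos' : (Matrix.of fun i j => (τ' i j).im).PosDef)
    (b : Fin h → ℂ) (z₁ : ℂ) (z' : Fin h → ℂ) :
    Tendsto (fun t : ℝ =>
        riemannTheta (blockTau (Complex.I * (t : ℂ)) b τ')
          (Fin.cons (z₁ - Complex.I * (t : ℂ) / 2) z'))
      atTop
      (nhds (riemannTheta τ' z' +
        Complex.exp (2 * (Real.pi : ℂ) * Complex.I * z₁) *
          riemannTheta τ' (fun i => z' i + b i))) := by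
  obtain ⟨T, hT, δ, hδ, K, hkey⟩ := key_ineq hh τ' hpos' b z₁ z'
  have hknn : ∀ n : Fin (h+1) → ℤ, (0:ℤ) ≤ kk n := by
    intro n; rw [kk]
    rcases le_or_gt (n 0) 0 with h0 | h0
    · nlinarith [mul_nonneg (neg_nonneg.mpr h0) (show (0:ℤ) ≤ 1 - n 0 by omega)]
    · exact mul_nonneg (by omega) (by omega)
  have hnormF : ∀ (t : ℝ) (n : Fin (h+1) → ℤ),
      ‖FF τ' b z₁ z' t n‖ =
        Real.exp (-(Real.pi * t * (kk n : ℝ)) + -Real.pi * RR τ' b z₁ z' n) := by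
    intro t n
    rw [FF, norm_mul, norm_cE, Complex.norm_exp, Complex.ofReal_re,
      ← Real.exp_add]
  have hble : ∀ n : Fin (h+1) → ℤ, bnd τ' b z₁ z' T n ≤
      Real.exp (Real.pi * K) * Real.exp (-(Real.pi * δ) * ∑ i, (n i : ℝ) ^ 2) := by
    intro n
    rw [bnd, ← Real.exp_add]
    apply Real.exp_le_exp.mpr
    have hple := mul_le_mul_of_nonneg_left (hkey n) Real.pi_pos.le
    nlinarith [hple]
  have hsum : Summable (bnd τ' b z₁ z' T) :=
    Summable.of_nonneg_of_le (fun n => (Real.exp_pos _).le) hble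
      ((pi_gauss_summable (h+1) (show 0 < Real.pi * δ by positivity)).mul_left
        (Real.exp (Real.pi * K)))
  have h_bound : ∀ᶠ t in atTop, ∀ n, ‖FF τ' b z₁ z' t n‖ ≤ bnd τ' b z₁ z' T n := by
    filter_upwards [eventually_ge_atTop T] with t ht n
    rw [hnormF]
    simp only [bnd]
    apply Real.exp_le_exp.mpr
    have hk0 : (0:ℝ) ≤ (kk n : ℝ) := by exact_mod_cast hknn n
    have hTt : T * (kk n : ℝ) ≤ t * (kk n : ℝ) := mul_le_mul_of_nonneg_right ht hk0
    nlinarith [mul_le_mul_of_nonneg_left hTt Real.pi_pos.le]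
  have h_lim : ∀ n, Tendsto (fun t => FF τ' b z₁ z' t n) atTop (nhds (gLim τ' b z₁ z' n)) := by
    intro n
    by_cases hn : n 0 = 0 ∨ n 0 = 1
    · have hk0 : kk n = 0 := by rw [kk]; rcases hn with h0 | h0 <;> rw [h0] <;> ring
      have : ∀ t : ℝ, FF τ' b z₁ z' t n = cE τ' b z₁ z' n := by
        intro t
        rw [FF, hk0]
        simp
      simp only [this, gLim, if_pos hn]
      exact tendsto_const_nhds
    · have hkpos : (0:ℤ) < kk n := by
        push_neg at hn
        rw [kk]
        rcases lt_trichotomy (n 0) 0 with h0 | h0 | h0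
        · exact mul_pos_of_neg_of_neg h0 (by omega)
        · exact absurd h0 hn.1
        · have : 2 ≤ n 0 := by omega
          exact mul_pos (by omega) (by omega)
      have hk1 : (0:ℝ) < (kk n : ℝ) := by exact_mod_cast hkpos
      simp only [gLim, if_neg hn]
      have heq : ∀ t : ℝ, ‖FF τ' b z₁ z' t n‖ =
          Real.exp ((-(Real.pi * (kk n : ℝ))) * t) *
            Real.exp (-Real.pi * RR τ' b z₁ z' n) := by
        intro t
        rw [hnormF, ← Real.exp_add]
        ring_nf
      have hlin : Tendsto (fun t : ℝ => (-(Real.pi * (kk n : ℝ))) * t) atTop atBot :=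
        (tendsto_const_mul_atBot_of_neg (by nlinarith [Real.pi_pos])).mpr tendsto_id
      have hexp : Tendsto (fun t : ℝ =>
          Real.exp ((-(Real.pi * (kk n : ℝ))) * t) *
            Real.exp (-Real.pi * RR τ' b z₁ z' n)) atTop (nhds 0) := by
        have := (Real.tendsto_exp_atBot.comp hlin).mul_const
          (Real.exp (-Real.pi * RR τ' b z₁ z' n))
        rwa [zero_mul] at this
      rw [tendsto_zero_iff_norm_tendsto_zero]
      exact hexp.congr fun t => (heq t).symm
  have main := tendsto_tsum_of_dominated_convergence hsum h_lim h_bound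
  have hFeq : (fun t : ℝ =>
      riemannTheta (blockTau (Complex.I * (t : ℂ)) b τ')
        (Fin.cons (z₁ - Complex.I * (t : ℂ) / 2) z')) =
      fun t => ∑' n, FF τ' b z₁ z' t n := by
    funext t
    rw [riemannTheta]
    exact tsum_congr fun n => term_eq τ' b z₁ z' t n
  -- identify the limit value
  have hgsum : Summable (gLim τ' b z₁ z') := by
    apply hsum.of_norm_bounded
    intro n
    by_cases hn : n 0 = 0 ∨ n 0 = 1
    · have hk0 : kk n = 0 := by rw [kk]; rcases hn with h0 | h0 <;> rw [h0] <;> ring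
      simp only [gLim, if_pos hn, bnd, hk0]
      rw [norm_cE]
      simp
    · simp only [gLim, if_neg hn]
      simp [(Real.exp_pos _).le, bnd]
  have hg0sum : Summable (fun n : Fin (h+1) → ℤ =>
      if n 0 = 0 then cE τ' b z₁ z' n else 0) := by
    apply hsum.of_norm_bounded
    intro n
    by_cases h0 : n 0 = 0
    · have hk0 : kk n = 0 := by rw [kk, h0]; ring
      simp only [bnd, hk0]
      rw [if_pos h0, norm_cE]
      simp
    · rw [if_neg h0]
      simp [(Real.exp_pos _).le, bnd]
  have hg1sum : Summable (fun n : Fin (h+1) → ℤ =>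
      if n 0 = 1 then cE τ' b z₁ z' n else 0) := by
    apply hsum.of_norm_bounded
    intro n
    by_cases h0 : n 0 = 1
    · have hk0 : kk n = 0 := by rw [kk, h0]; ring
      simp only [bnd, hk0]
      rw [if_pos h0, norm_cE]
      simp
    · rw [if_neg h0]
      simp [(Real.exp_pos _).le, bnd]
  have hsplit : ∀ n, gLim τ' b z₁ z' n =
      (if n 0 = 0 then cE τ' b z₁ z' n else 0) +
      (if n 0 = 1 then cE τ' b z₁ z' n else 0) := by
    intro n
    by_cases h0 : n 0 = 0
    · have h1 : ¬ n 0 = 1 := by omega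
      simp only [gLim]
      simp [h0, h1]
    · by_cases h1 : n 0 = 1
      · simp only [gLim]; simp [h0, h1]
      · simp only [gLim]; simp [h0, h1]
  have hinj0 : Function.Injective (fun m : Fin h → ℤ => (Fin.cons (0:ℤ) m : Fin (h+1) → ℤ)) := by
    intro m1 m2 he
    simpa [Fin.tail_cons] using congrArg Fin.tail he
  have hinj1 : Function.Injective (fun m : Fin h → ℤ => (Fin.cons (1:ℤ) m : Fin (h+1) → ℤ)) := by
    intro m1 m2 he
    simpa [Fin.tail_cons] using congrArg Fin.tail he
  have h0eq : (∑' n : Fin (h+1) → ℤ, if n 0 = 0 then cE τ' b z₁ z' n else 0) =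
      riemannTheta τ' z' := by
    rw [← hinj0.tsum_eq (f := fun n : Fin (h+1) → ℤ => if n 0 = 0 then cE τ' b z₁ z' n else 0)
      (fun n hn => ?_), riemannTheta]
    · refine tsum_congr fun m => ?_
      have hcz : (Fin.cons (0:ℤ) m : Fin (h+1) → ℤ) 0 = 0 := Fin.cons_zero _ _
      rw [if_pos hcz, cE]
      congr 1
      simp only [Fin.cons_zero, Fin.cons_succ, Int.cast_zero]
      ring
    · have hn0 : n 0 = 0 := by
        by_contra hc
        simp [hc] at hn
      exact ⟨Fin.tail n, by rw [← hn0]; exact Fin.cons_self_tail n⟩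
  have h1eq : (∑' n : Fin (h+1) → ℤ, if n 0 = 1 then cE τ' b z₁ z' n else 0) =
      Complex.exp (2 * (Real.pi : ℂ) * Complex.I * z₁) *
        riemannTheta τ' (fun i => z' i + b i) := by
    rw [← hinj1.tsum_eq (f := fun n : Fin (h+1) → ℤ => if n 0 = 1 then cE τ' b z₁ z' n else 0)
      (fun n hn => ?_), riemannTheta, ← tsum_mul_left]
    · refine tsum_congr fun m => ?_
      have hcz : (Fin.cons (1:ℤ) m : Fin (h+1) → ℤ) 0 = 1 := Fin.cons_zero _ _
      rw [if_pos hcz, cE, ← Complex.exp_add]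
      congr 1
      simp only [Fin.cons_zero, Fin.cons_succ, Int.cast_one]
      have e3 : ∑ j : Fin h, (m j : ℂ) * (z' j + b j) =
          ∑ j : Fin h, (m j : ℂ) * z' j + ∑ j : Fin h, b j * (m j : ℂ) := by
        rw [← Finset.sum_add_distrib]
        exact Finset.sum_congr rfl fun j _ => by ring
      rw [e3]
      ring
    · have hn0 : n 0 = 1 := by
        by_contra hc
        simp [hc] at hn
      exact ⟨Fin.tail n, by rw [← hn0]; exact Fin.cons_self_tail n⟩
  have hval : riemannTheta τ' z' +
      Complex.exp (2 * (Real.pi : ℂ) * Complex.I * z₁) *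
        riemannTheta τ' (fun i => z' i + b i) = ∑' n, gLim τ' b z₁ z' n := by
    rw [tsum_congr hsplit, Summable.tsum_add hg0sum hg1sum, h0eq, h1eq]
  rw [hFeq, hval]
  exact main
end

section
/- Let h ≥ 1, n ≥ 1, τ ∈ H_h, b₁,…,b_n ∈ ℂ^h, and let t_{jk} (1 ≤ j < k ≤ n) be nonzero complex numbers, with t_{kj} := t_{jk}. For z ∈ ℂ^h and x = (x₁,…,x_n) ∈ ℂ^n define the standard semi-abelic theta function T(z,x) := Σ_{μ ∈ {0,1}^n} (∏_{j=1}^n x_j^{μ_j}) (∏_{1≤j<k≤n} t_{jk}^{μ_j μ_k}) θ(τ, z + Σ_{j=1}^n μ_j b_j). Then for all z ∈ ℂ^h and all x with every x_j ≠ 0, T( −b₁−⋯−b_n − z, ( x_j^{-1} ∏_{k≠j} t_{jk}^{-1} )_{j=1,…,n} ) = (∏_{j=1}^n x_j^{-1}) (∏_{1≤j<k≤n} t_{jk}^{-1}) · T(z, x); that is, T is invariant up to the stated factor under the involution j(z,x) = (−Σb_j − z, (x_j^{-1}∏_{k≠j}t_{jk}^{-1})_j). -/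
open Complex Matrix Finset Filter

/-- The standard semi-abelic theta function of a torus rank `n` degeneration:
`T(z,x) = Σ_{μ ∈ {0,1}^n} (∏_j x_j^{μ_j}) (∏_{j<k} t_{jk}^{μ_j μ_k}) θ(τ, z + Σ_j μ_j b_j)`. -/
noncomputable def Tstd {h n : ℕ} (τ : Matrix (Fin h) (Fin h) ℂ) (b : Fin n → Fin h → ℂ)
    (t : Fin n → Fin n → ℂ) (z : Fin h → ℂ) (x : Fin n → ℂ) : ℂ :=
  ∑ μ : Fin n → Bool,
    (∏ j, if μ j = true then x j else 1) *
      (∏ j, ∏ k, if j < k ∧ μ j = true ∧ μ k = true then t j k else 1) *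
      riemannTheta τ (fun i => z i + ∑ j, if μ j = true then b j i else 0)

lemma riemannTheta_neg {g : ℕ} (τ : Matrix (Fin g) (Fin g) ℂ) (z : Fin g → ℂ) :
    riemannTheta τ (fun i => -(z i)) = riemannTheta τ z := by
  unfold riemannTheta
  rw [← (Equiv.neg (Fin g → ℤ)).tsum_eq]
  apply tsum_congr
  intro m
  simp only [Equiv.neg_apply, Pi.neg_apply]
  congr 1
  have h1 : (∑ i, ∑ j, ((-m i : ℤ) : ℂ) * τ i j * ((-m j : ℤ) : ℂ))
      = ∑ i, ∑ j, (m i : ℂ) * τ i j * (m j : ℂ) := by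
    refine Finset.sum_congr rfl fun i _ => Finset.sum_congr rfl fun j _ => ?_
    push_cast; ring
  have h2 : (∑ i, ((-m i : ℤ) : ℂ) * -(z i)) = ∑ i, (m i : ℂ) * z i := by
    refine Finset.sum_congr rfl fun i _ => ?_
    push_cast; ring
  rw [h1, h2]

lemma coeff_aux {n : ℕ} (t : Fin n → Fin n → ℂ) (ht0 : ∀ j k, t j k ≠ 0)
    (htsymm : ∀ j k, t k j = t j k) (x : Fin n → ℂ) (hx : ∀ j, x j ≠ 0) (μ : Fin n → Bool) :
    (∏ j, if μ j = false then (x j)⁻¹ * ∏ k ∈ Finset.univ.erase j, (t j k)⁻¹ else 1) *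
      (∏ j, ∏ k, if j < k ∧ μ j = false ∧ μ k = false then t j k else 1) =
    (∏ j, (x j)⁻¹) * (∏ j, ∏ k, if j < k then (t j k)⁻¹ else 1) *
      ((∏ j, if μ j = true then x j else 1) *
       (∏ j, ∏ k, if j < k ∧ μ j = true ∧ μ k = true then t j k else 1)) := by
  have s1 : (∏ j, if μ j = false then (x j)⁻¹ * ∏ k ∈ Finset.univ.erase j, (t j k)⁻¹ else 1)
      = (∏ j, if μ j = false then (x j)⁻¹ else 1) *
        ∏ j, ∏ k, if k ≠ j ∧ μ j = false then (t j k)⁻¹ else 1 := by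
    rw [← Finset.prod_mul_distrib]
    refine Finset.prod_congr rfl fun j _ => ?_
    by_cases hj : μ j = false
    · simp only [hj, if_true]
      congr 1
      rw [← Finset.filter_ne', Finset.prod_filter]
      refine Finset.prod_congr rfl fun k _ => ?_
      by_cases hk : k ≠ j <;> simp [hk]
    · simp [hj]
  have s2 : (∏ j, if μ j = false then (x j)⁻¹ else 1)
      = (∏ j, (x j)⁻¹) * ∏ j, if μ j = true then x j else 1 := by
    rw [← Finset.prod_mul_distrib]
    refine Finset.prod_congr rfl fun j _ => ?_
    cases hj : μ j <;> simp [inv_mul_cancel₀ (hx j)]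
  have s3a : (∏ j, ∏ k, if k ≠ j ∧ μ j = false then (t j k)⁻¹ else 1)
      = (∏ j, ∏ k, if j < k ∧ μ j = false then (t j k)⁻¹ else 1) *
        (∏ j, ∏ k, if k < j ∧ μ j = false then (t j k)⁻¹ else 1) := by
    rw [← Finset.prod_mul_distrib]
    refine Finset.prod_congr rfl fun j _ => ?_
    rw [← Finset.prod_mul_distrib]
    refine Finset.prod_congr rfl fun k _ => ?_
    rcases lt_trichotomy j k with hjk | rfl | hkj
    · simp [hjk, hjk.ne', not_lt_of_gt hjk]
    · simp
    · simp [hkj, hkj.ne, not_lt_of_gt hkj]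
  have s3b : (∏ j, ∏ k, if k < j ∧ μ j = false then (t j k)⁻¹ else 1)
      = (∏ j, ∏ k, if j < k ∧ μ k = false then (t j k)⁻¹ else 1) := by
    rw [Finset.prod_comm]
    refine Finset.prod_congr rfl fun j _ => Finset.prod_congr rfl fun k _ => ?_
    rw [htsymm]
  have key : (∏ j, ∏ k, if j < k ∧ μ j = false then (t j k)⁻¹ else 1) *
        (∏ j, ∏ k, if j < k ∧ μ k = false then (t j k)⁻¹ else 1) *
        (∏ j, ∏ k, if j < k ∧ μ j = false ∧ μ k = false then t j k else 1)
      = (∏ j, ∏ k, if j < k then (t j k)⁻¹ else 1) *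
        (∏ j, ∏ k, if j < k ∧ μ j = true ∧ μ k = true then t j k else 1) := by
    simp only [← Finset.prod_mul_distrib]
    refine Finset.prod_congr rfl fun j _ => Finset.prod_congr rfl fun k _ => ?_
    by_cases hjk : j < k <;> cases hmj : μ j <;> cases hmk : μ k <;>
      simp [hjk, hmj, hmk] <;> field_simp [ht0 j k]
  calc (∏ j, if μ j = false then (x j)⁻¹ * ∏ k ∈ Finset.univ.erase j, (t j k)⁻¹ else 1) *
      (∏ j, ∏ k, if j < k ∧ μ j = false ∧ μ k = false then t j k else 1)
      = ((∏ j, (x j)⁻¹) * ∏ j, if μ j = true then x j else 1) *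
        ((∏ j, ∏ k, if j < k ∧ μ j = false then (t j k)⁻¹ else 1) *
         (∏ j, ∏ k, if j < k ∧ μ k = false then (t j k)⁻¹ else 1) *
         (∏ j, ∏ k, if j < k ∧ μ j = false ∧ μ k = false then t j k else 1)) := by
        rw [s1, s2, s3a, s3b]; ring
    _ = _ := by rw [key]; ring

/-- The standard semi-abelic theta function is invariant, up to the stated factor, under the
involution `j(z,x) = (−Σ b_j − z, (x_j⁻¹ ∏_{k≠j} t_{jk}⁻¹)_j)`. -/
theorem statement12 (h n : ℕ) (hh : 1 ≤ h) (hn : 1 ≤ n)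
    (τ : Matrix (Fin h) (Fin h) ℂ) (hsymm : τ.IsSymm)
    (hpos : (Matrix.of fun i j => (τ i j).im).PosDef)
    (b : Fin n → Fin h → ℂ) (t : Fin n → Fin n → ℂ)
    (ht0 : ∀ j k, t j k ≠ 0) (htsymm : ∀ j k, t k j = t j k)
    (z : Fin h → ℂ) (x : Fin n → ℂ) (hx : ∀ j, x j ≠ 0) :
    Tstd τ b t (fun i => -(∑ j, b j i) - z i)
        (fun j => (x j)⁻¹ * ∏ k ∈ Finset.univ.erase j, (t j k)⁻¹) =
      (∏ j, (x j)⁻¹) * (∏ j, ∏ k, if j < k then (t j k)⁻¹ else 1) * Tstd τ b t z x := by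
  unfold Tstd
  rw [Finset.mul_sum]
  refine (Fintype.sum_bijective (fun μ j => !μ j)
    (Function.Involutive.bijective fun μ => by funext j; simp) _ _ fun μ => ?_).symm
  simp only [Bool.not_eq_true']
  have harg : (fun i => (-(∑ j, b j i) - z i) + ∑ j, if μ j = false then b j i else 0)
      = fun i => -((z i + ∑ j, if μ j = true then b j i else 0)) := by
    funext i
    have hsum : (∑ j, if μ j = false then b j i else 0) +
        (∑ j, if μ j = true then b j i else 0) = ∑ j, b j i := by
      rw [← Finset.sum_add_distrib]
      exact Finset.sum_congr rfl fun j _ => by cases μ j <;> simp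
    linear_combination hsum
  rw [harg, riemannTheta_neg]
  have := coeff_aux t ht0 htsymm x hx μ
  linear_combination (riemannTheta τ fun i => z i + ∑ j, if μ j = true then b j i else 0) * this.symm
end
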